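/- arXiv:2012.10250 — 2 statements merged into one kernel-verified Lean document; each statement's English description precedes it below -/
import Mathlib

section
/- If x(k) ∈ X(k) for the tightened sets defined recursively by X(k+1) = X(k) ⊖ Φ^k W with X(0) = X, and e(k) = Σ_{j=0}^{k-1} Φ^{k-1-j} w(j) with w(j) ∈ W, then x(k) + e(k) ∈ X for all k ≥ 0. (Constraint tightening guarantees original constraint satisfaction.) -/
/-- Constraint tightening guarantees original constraint satisfaction:
if `x(k)` lies in the tightened set `X(k)` (with `X(0)=X`,
`X(k+1)=X(k) ⊖ Φ^k W`) and `e` is the accumulated disturbance error, then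
`x(k) + e(k) ∈ X`. -/
theorem tightened_constraints_imply_original
    {n : ℕ} (Φ : Matrix (Fin n) (Fin n) ℝ) (X W : Set (Fin n → ℝ))
    (Xs : ℕ → Set (Fin n → ℝ))
    (hX0 : Xs 0 = X)
    (hXs : ∀ k, Xs (k + 1) = {z | ∀ v ∈ (Φ ^ k).mulVec '' W, z + v ∈ Xs k})
    (x e w : ℕ → (Fin n → ℝ))
    (hx : ∀ k, x k ∈ Xs k)
    (hw : ∀ k, w k ∈ W)
    (he0 : e 0 = 0)
    (he : ∀ k, e (k + 1) = Φ.mulVec (e k) + w k) :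
    ∀ k, x k + e k ∈ X := by
  have aux : ∀ k (u : ℕ → Fin n → ℝ), (∀ j, u j ∈ W) → ∀ z ∈ Xs k,
      z + ∑ j ∈ Finset.range k, (Φ ^ (k - 1 - j)).mulVec (u j) ∈ X := by
    intro k
    induction k with
    | zero =>
      intro u hu z hz
      simpa [hX0] using hz
    | succ k ih =>
      intro u hu z hz
      rw [hXs k] at hz
      have h0 : z + (Φ ^ k).mulVec (u 0) ∈ Xs k :=
        hz _ ⟨u 0, hu 0, rfl⟩
      have := ih (fun j => u (j + 1)) (fun j => hu (j + 1)) _ h0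
      have hsum : ∑ j ∈ Finset.range (k + 1), (Φ ^ (k + 1 - 1 - j)).mulVec (u j)
          = (Φ ^ k).mulVec (u 0)
            + ∑ j ∈ Finset.range k, (Φ ^ (k - 1 - j)).mulVec (u (j + 1)) := by
        rw [Finset.sum_range_succ', add_comm]
        congr 1
        apply Finset.sum_congr rfl
        intro j hj
        have h : k + 1 - 1 - (j + 1) = k - 1 - j := by omega
        rw [h]
      rw [hsum, ← add_assoc]
      exact this
  have heq : ∀ k, e k = ∑ j ∈ Finset.range k, (Φ ^ (k - 1 - j)).mulVec (w j) := by
    intro k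
    induction k with
    | zero => simpa using he0
    | succ k ih =>
      rw [he k, ih, Finset.sum_range_succ]
      congr 1
      · rw [← Matrix.mulVecLin_apply, map_sum]
        apply Finset.sum_congr rfl
        intro j hj
        simp only [Finset.mem_range] at hj
        rw [Matrix.mulVecLin_apply, Matrix.mulVec_mulVec, ← pow_succ']
        have h : k - 1 - j + 1 = k + 1 - 1 - j := by omega
        rw [h]
      · simp
  intro k
  rw [heq k]
  exact aux k w hw _ (hx k)
end

section
/- Let P_α, P, R be symmetric positive definite with P_α ≻ Γᵀ P Γ + R. Let ᾱ, α_ad ∈ ℝ^p with ᾱ ≠ α_ad, and for λ ∈ (0,1) define J̃(λ) = λ² ‖ᾱ − α_ad‖²_{ΓᵀPΓ+R} + (1−λ)² ‖ᾱ − α_ad‖²_{P_α} + ‖α_ad‖²_{P_α} + 2(1−λ) α_adᵀ P_α (ᾱ − α_ad) and J̄ = ‖ᾱ‖²_{P_α}. If α_adᵀ P_α (ᾱ − α_ad) ≥ 0, then J̄ > J̃(λ) for all λ ∈ (0,1). -/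
open Matrix

namespace Matrix

variable {m : Type*} [Fintype m]

theorem IsSymm.add_dotProduct_mulVec_add {R : Type*} [CommRing R] {M : Matrix m m R}
    (hM : M.IsSymm) (x y : m → R) :
    (x + y) ⬝ᵥ M *ᵥ (x + y) = x ⬝ᵥ M *ᵥ x + y ⬝ᵥ M *ᵥ y + 2 * (y ⬝ᵥ M *ᵥ x) := by
  have hxy : x ⬝ᵥ M *ᵥ y = y ⬝ᵥ M *ᵥ x := by
    rw [← dotProduct_transpose_mulVec, hM.eq]
  rw [mulVec_add, add_dotProduct, dotProduct_add, dotProduct_add, hxy]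
  ring

theorem dotProduct_mulVec_lt_of_posDef_sub {R : Type*} [Ring R] [PartialOrder R] [StarRing R]
    [IsOrderedAddMonoid R] {A B : Matrix m m R} (h : (A - B).PosDef) {x : m → R} (hx : x ≠ 0) :
    star x ⬝ᵥ B *ᵥ x < star x ⬝ᵥ A *ᵥ x := by
  simpa [sub_mulVec, dotProduct_sub] using h.dotProduct_mulVec_pos hx

end Matrix

/-- With `d = ᾱ - α_ad`, `a = ‖d‖²_{Pα}`, `q = ‖d‖²_{ΓᵀPΓ+R}` and `c = α_adᵀ Pα d`,
the gap `J̄ - J̃(λ)` is `λ² (a - q) + 2λ(1 - λ) a + 2λ c`. -/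
theorem interpolated_cost_lt {a q c lam : ℝ} (hqa : q < a) (ha : 0 < a) (hc : 0 ≤ c)
    (hlam : lam ∈ Set.Ioo (0 : ℝ) 1) :
    lam ^ 2 * q + (1 - lam) ^ 2 * a + 2 * (1 - lam) * c < a + 2 * c := by
  obtain ⟨hl0, hl1⟩ := hlam
  nlinarith [mul_pos (pow_pos hl0 2) (sub_pos.mpr hqa),
    mul_pos (mul_pos hl0 (sub_pos.mpr hl1)) ha, mul_nonneg hl0.le hc]

theorem steady_state_cost_contradiction_general
    {n p : ℕ} (Γ : Matrix (Fin n) (Fin p) ℝ)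
    (P : Matrix (Fin n) (Fin n) ℝ) (R Pα : Matrix (Fin p) (Fin p) ℝ)
    (hPα : Pα.PosDef)
    (hdom : (Pα - (Γᵀ * P * Γ + R)).PosDef)
    (αbar αad : Fin p → ℝ) (hne : αbar ≠ αad)
    (hvi : 0 ≤ αad ⬝ᵥ Pα.mulVec (αbar - αad)) :
    ∀ lam ∈ Set.Ioo (0 : ℝ) 1,
      (αbar ⬝ᵥ Pα.mulVec αbar) >
        lam ^ 2 * ((αbar - αad) ⬝ᵥ (Γᵀ * P * Γ + R).mulVec (αbar - αad)) +
          (1 - lam) ^ 2 * ((αbar - αad) ⬝ᵥ Pα.mulVec (αbar - αad)) +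
          (αad ⬝ᵥ Pα.mulVec αad) +
          2 * (1 - lam) * (αad ⬝ᵥ Pα.mulVec (αbar - αad)) := by
  intro lam hlam
  have hd : αbar - αad ≠ 0 := sub_ne_zero.mpr hne
  have hpos : 0 < (αbar - αad) ⬝ᵥ Pα *ᵥ (αbar - αad) := by
    simpa using hPα.dotProduct_mulVec_pos hd
  have hlt : (αbar - αad) ⬝ᵥ (Γᵀ * P * Γ + R) *ᵥ (αbar - αad) <
      (αbar - αad) ⬝ᵥ Pα *ᵥ (αbar - αad) := by
    simpa using dotProduct_mulVec_lt_of_posDef_sub hdom hd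
  have hsplit := (isHermitian_iff_isSymm.mp hPα.isHermitian).add_dotProduct_mulVec_add
    (αbar - αad) αad
  rw [sub_add_cancel] at hsplit
  have := interpolated_cost_lt hlt hpos hvi hlam
  linarith

/-- The cost comparison in the steady-state optimality argument:
`J̄ > J̃(λ)` for all `λ ∈ (0,1)`. -/
theorem steady_state_cost_contradiction
    {n p : ℕ} (Γ : Matrix (Fin n) (Fin p) ℝ)
    (P : Matrix (Fin n) (Fin n) ℝ) (R Pα : Matrix (Fin p) (Fin p) ℝ)
    (hP : P.PosDef) (hR : R.PosDef) (hPα : Pα.PosDef)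
    (hdom : (Pα - (Γᵀ * P * Γ + R)).PosDef)
    (αbar αad : Fin p → ℝ) (hne : αbar ≠ αad)
    (hvi : 0 ≤ αad ⬝ᵥ Pα.mulVec (αbar - αad)) :
    ∀ lam ∈ Set.Ioo (0 : ℝ) 1,
      (αbar ⬝ᵥ Pα.mulVec αbar) >
        lam ^ 2 * ((αbar - αad) ⬝ᵥ (Γᵀ * P * Γ + R).mulVec (αbar - αad)) +
          (1 - lam) ^ 2 * ((αbar - αad) ⬝ᵥ Pα.mulVec (αbar - αad)) +
          (αad ⬝ᵥ Pα.mulVec αad) +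
          2 * (1 - lam) * (αad ⬝ᵥ Pα.mulVec (αbar - αad)) :=
  steady_state_cost_contradiction_general Γ P R Pα hPα hdom αbar αad hne hvi
end
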